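/- arXiv:2002.08405 — 3 statements merged into one kernel-verified Lean document; each statement's English description precedes it below -/
import Mathlib

section
/- Let a < b be real numbers and let X be a random variable taking values in [a,b] with mean μ satisfying l ≤ μ ≤ u, where a ≤ l ≤ u ≤ b. If l ≥ (a+b)/2, then for every s ≥ 0, E[exp(s(X−μ))] ≤ exp(s² (l−a)(b−l) / 2). -/
/-!
By convexity of `exp`, `E[exp (s (X - μ))]` is at most its value for the two-point law on
`{a, b}` with the same mean; up to the scale `b - a`, that law is a centred Bernoulli variable
with success probability `p = (μ - a) / (b - a) ≥ 1/2`. Its cumulant generating function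
`L h = log (1 - p + p eʰ) - p h` vanishes to first order at `0`, and `L''` is the variance of the
exponentially tilted Bernoulli law; for `h ≥ 0` tilting only pushes the success probability further
above `1/2`, so `L'' ≤ p (1 - p)` and `L h ≤ p (1 - p) h² / 2 = s² (μ - a) (b - μ) / 2`.
Finally `t ↦ (t - a) (b - t)` decreases on `[(a + b) / 2, ∞)`, and `l ≤ μ`.
-/

open MeasureTheory ProbabilityTheory Real Set

theorem le_of_hasDerivAt_le {f g f' g' : ℝ → ℝ} {a x : ℝ}
    (hf : ∀ y, HasDerivAt f (f' y) y) (hg : ∀ y, HasDerivAt g (g' y) y) (ha : f a ≤ g a)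
    (hfg : ∀ y, a ≤ y → f' y ≤ g' y) (hx : a ≤ x) : f x ≤ g x :=
  image_le_of_deriv_right_le_deriv_boundary (fun y _ ↦ (hf y).continuousAt.continuousWithinAt)
    (fun y _ ↦ (hf y).hasDerivWithinAt) ha (fun y _ ↦ (hg y).continuousAt.continuousWithinAt)
    (fun y _ ↦ (hg y).hasDerivWithinAt) (fun y hy ↦ hfg y hy.1) ⟨hx, le_rfl⟩

section Bernoulli

variable {p : ℝ}

theorem one_sub_add_mul_exp_pos (hp0 : 0 ≤ p) (hp1 : p ≤ 1) (x : ℝ) : 0 < 1 - p + p * exp x := by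
  rcases hp0.eq_or_lt with rfl | hp0
  · simp
  · nlinarith [exp_pos x]

theorem hasDerivAt_log_one_sub_add_mul_exp_sub (hp0 : 0 ≤ p) (hp1 : p ≤ 1) (x : ℝ) :
    HasDerivAt (fun x ↦ log (1 - p + p * exp x) - p * x)
      (p * exp x / (1 - p + p * exp x) - p) x := by
  have hD := ((hasDerivAt_exp x).const_mul p).const_add (1 - p)
  exact ((hD.log (one_sub_add_mul_exp_pos hp0 hp1 x).ne').sub
    ((hasDerivAt_id' x).const_mul p)).congr_deriv (by ring)

theorem hasDerivAt_mul_exp_div_one_sub_add_mul_exp_sub (hp0 : 0 ≤ p) (hp1 : p ≤ 1) (x : ℝ) :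
    HasDerivAt (fun x ↦ p * exp x / (1 - p + p * exp x) - p)
      (p * (1 - p) * exp x / (1 - p + p * exp x) ^ 2) x := by
  have hN := (hasDerivAt_exp x).const_mul p
  exact ((hN.div (hN.const_add (1 - p)) (one_sub_add_mul_exp_pos hp0 hp1 x).ne').sub_const
    p).congr_deriv (by ring)

theorem mul_exp_div_one_sub_add_mul_exp_sq_le (hp : 1 / 2 ≤ p) (hp1 : p ≤ 1) {x : ℝ}
    (hx : 0 ≤ x) : p * (1 - p) * exp x / (1 - p + p * exp x) ^ 2 ≤ p * (1 - p) := by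
  have hy : 1 ≤ exp x := one_le_exp hx
  have hD := one_sub_add_mul_exp_pos (by linarith) hp1 x
  rw [div_le_iff₀ (by positivity)]
  -- `(1 - p + p y)² - y = (2p - 1)(y - 1) + p² (y - 1)²` with `y = eˣ ≥ 1`
  have hsq : exp x ≤ (1 - p + p * exp x) ^ 2 := by
    nlinarith [sq_nonneg (p * (exp x - 1)),
      mul_nonneg (by linarith : 0 ≤ 2 * p - 1) (by linarith : 0 ≤ exp x - 1)]
  exact mul_le_mul_of_nonneg_left hsq (by nlinarith)

theorem log_one_sub_add_mul_exp_sub_le (hp : 1 / 2 ≤ p) (hp1 : p ≤ 1) {h : ℝ} (hh : 0 ≤ h) :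
    log (1 - p + p * exp h) - p * h ≤ p * (1 - p) * h ^ 2 / 2 := by
  have hp0 : 0 ≤ p := by linarith
  have hquad : ∀ x, HasDerivAt (fun x ↦ p * (1 - p) * x ^ 2 / 2) (p * (1 - p) * x) x := fun x ↦ by
    refine (((hasDerivAt_pow 2 x).const_mul (p * (1 - p))).div_const 2).congr_deriv ?_
    push_cast
    ring
  have hlin : ∀ x, HasDerivAt (fun x ↦ p * (1 - p) * x) (p * (1 - p)) x := fun x ↦ by
    simpa using (hasDerivAt_id x).const_mul (p * (1 - p))
  refine le_of_hasDerivAt_le (hasDerivAt_log_one_sub_add_mul_exp_sub hp0 hp1) hquad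
    (by simp) (fun y hy ↦ ?_) hh
  refine le_of_hasDerivAt_le (hasDerivAt_mul_exp_div_one_sub_add_mul_exp_sub hp0 hp1) hlin
    (by simp) (fun z hz ↦ mul_exp_div_one_sub_add_mul_exp_sq_le hp hp1 hz) hy

theorem one_sub_mul_exp_add_mul_exp_le (hp : 1 / 2 ≤ p) (hp1 : p ≤ 1) {h : ℝ} (hh : 0 ≤ h) :
    (1 - p) * exp (-(p * h)) + p * exp ((1 - p) * h) ≤ exp (p * (1 - p) * h ^ 2 / 2) := by
  have hD := one_sub_add_mul_exp_pos (by linarith) hp1 h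
  calc (1 - p) * exp (-(p * h)) + p * exp ((1 - p) * h)
      = exp (log (1 - p + p * exp h) - p * h) := by
        rw [exp_sub, exp_log hD, div_eq_mul_inv, ← exp_neg,
          show (1 - p) * h = h + -(p * h) by ring, exp_add]
        ring
    _ ≤ exp (p * (1 - p) * h ^ 2 / 2) := exp_le_exp.2 (log_one_sub_add_mul_exp_sub_le hp hp1 hh)

end Bernoulli

theorem mul_exp_sub_mul_exp_le {a b s : ℝ} (hab : a < b) (hb : 0 ≤ b) (hsum : a + b ≤ 0)
    (hs : 0 ≤ s) : b * exp (s * a) - a * exp (s * b) ≤ (b - a) * exp (-(a * b) * s ^ 2 / 2) := by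
  have hba : 0 < b - a := sub_pos.2 hab
  have hp : 1 / 2 ≤ -a / (b - a) := by rw [le_div_iff₀ hba]; linarith
  have hp1 : -a / (b - a) ≤ 1 := by rw [div_le_one hba]; linarith
  have key := one_sub_mul_exp_add_mul_exp_le hp hp1 (mul_nonneg hs hba.le)
  have e1 : -(-a / (b - a) * (s * (b - a))) = s * a := by field_simp
  have e2 : (1 - -a / (b - a)) * (s * (b - a)) = s * b := by field_simp; ring
  have e3 : -a / (b - a) * (1 - -a / (b - a)) * (s * (b - a)) ^ 2 / 2 = -(a * b) * s ^ 2 / 2 := by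
    field_simp; ring
  rw [e1, e2, e3] at key
  calc b * exp (s * a) - a * exp (s * b)
      = (b - a) * ((1 - -a / (b - a)) * exp (s * a) + -a / (b - a) * exp (s * b)) := by
        field_simp
        ring
    _ ≤ (b - a) * exp (-(a * b) * s ^ 2 / 2) := mul_le_mul_of_nonneg_left key hba.le

theorem ConvexOn.le_chord_of_mem_Icc {𝕜 : Type*} [Field 𝕜] [LinearOrder 𝕜] [IsStrictOrderedRing 𝕜]
    {s : Set 𝕜} {f : 𝕜 → 𝕜} (hf : ConvexOn 𝕜 s f) {a b x : 𝕜} (ha : a ∈ s) (hb : b ∈ s)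
    (hx : x ∈ Icc a b) : (b - a) * f x ≤ (b - x) * f a + (x - a) * f b := by
  rcases hx.1.eq_or_lt with rfl | hax
  · simp
  rcases hx.2.eq_or_lt with rfl | hxb
  · simp
  exact hf.secant_mono_aux1 ha hb hax hxb

theorem ConvexOn.mul_integral_comp_le {Ω : Type*} [MeasurableSpace Ω] {P : Measure Ω}
    [IsProbabilityMeasure P] {f : ℝ → ℝ} {a b : ℝ} {X : Ω → ℝ} (hf : ConvexOn ℝ (Icc a b) f)
    (hX : ∀ᵐ ω ∂P, X ω ∈ Icc a b) (hXi : Integrable X P)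
    (hfX : Integrable (fun ω ↦ f (X ω)) P) :
    (b - a) * ∫ ω, f (X ω) ∂P ≤ (b - ∫ ω, X ω ∂P) * f a + (∫ ω, X ω ∂P - a) * f b := by
  obtain ⟨ω, hω⟩ := hX.exists
  have hab : a ≤ b := hω.1.trans hω.2
  have hleft : Integrable (fun ω ↦ (b - X ω) * f a) P := ((integrable_const b).sub hXi).mul_const _
  have hright : Integrable (fun ω ↦ (X ω - a) * f b) P := (hXi.sub (integrable_const a)).mul_const _
  calc (b - a) * ∫ ω, f (X ω) ∂P = ∫ ω, (b - a) * f (X ω) ∂P := (integral_const_mul _ _).symm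
    _ ≤ ∫ ω, (b - X ω) * f a + (X ω - a) * f b ∂P :=
      integral_mono_ae (hfX.const_mul _) (hleft.add hright)
        (hX.mono fun ω hω ↦ hf.le_chord_of_mem_Icc (left_mem_Icc.2 hab) (right_mem_Icc.2 hab) hω)
    _ = (b - ∫ ω, X ω ∂P) * f a + (∫ ω, X ω ∂P - a) * f b := by
      rw [integral_add hleft hright, integral_mul_const, integral_mul_const,
        integral_sub (integrable_const b) hXi, integral_sub hXi (integrable_const a)]
      simp

theorem integral_exp_mul_le_of_mem_Icc_of_integral_eq_zero {Ω : Type*} [MeasurableSpace Ω]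
    {P : Measure Ω} [IsProbabilityMeasure P] {Y : Ω → ℝ} {a b s : ℝ} (hab : a < b)
    (hsum : a + b ≤ 0) (hs : 0 ≤ s) (hYm : AEMeasurable Y P) (hY : ∀ᵐ ω ∂P, Y ω ∈ Icc a b)
    (hY0 : ∫ ω, Y ω ∂P = 0) : ∫ ω, exp (s * Y ω) ∂P ≤ exp (-(a * b) * s ^ 2 / 2) := by
  have hYi : Integrable Y P := .of_mem_Icc a b hYm hY
  have hb : 0 ≤ b := by
    simpa [hY0] using integral_mono_ae hYi (integrable_const b) (hY.mono fun ω hω ↦ hω.2)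
  have hconv : ConvexOn ℝ (Icc a b) (fun y ↦ exp (s * y)) :=
    (convexOn_exp.comp_linearMap (LinearMap.mulLeft ℝ s)).subset (subset_univ _) (convex_Icc a b)
  have hchord := hconv.mul_integral_comp_le hY hYi (integrable_exp_mul_of_mem_Icc hYm hY)
  rw [hY0] at hchord
  refine le_of_mul_le_mul_left ?_ (sub_pos.2 hab)
  linarith [mul_exp_sub_mul_exp_le hab hb hsum hs]

theorem mgf_bound_high_lower_bound_general
    {Ω : Type*} [MeasurableSpace Ω] (P : Measure Ω) [IsProbabilityMeasure P]
    (a b l μ : ℝ) (hab : a < b)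
    (hl : (a + b) / 2 ≤ l)
    (X : Ω → ℝ) (hmeas : Measurable X)
    (hbdd : ∀ᵐ ω ∂P, X ω ∈ Set.Icc a b)
    (hmean : ∫ ω, X ω ∂P = μ)
    (hlμ : l ≤ μ)
    (s : ℝ) (hs : 0 ≤ s) :
    ∫ ω, Real.exp (s * (X ω - μ)) ∂P ≤ Real.exp (s ^ 2 * (l - a) * (b - l) / 2) := by
  have hcentred : ∀ᵐ ω ∂P, X ω - μ ∈ Icc (a - μ) (b - μ) :=
    hbdd.mono fun ω hω ↦ ⟨sub_le_sub_right hω.1 μ, sub_le_sub_right hω.2 μ⟩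
  have hmean0 : ∫ ω, (X ω - μ) ∂P = 0 := by
    rw [integral_sub (.of_mem_Icc a b hmeas.aemeasurable hbdd) (integrable_const μ), hmean]
    simp
  have hvar : (μ - a) * (b - μ) ≤ (l - a) * (b - l) := by
    nlinarith [mul_nonneg (sub_nonneg.2 hlμ) (by linarith : 0 ≤ μ + l - a - b)]
  calc ∫ ω, exp (s * (X ω - μ)) ∂P ≤ exp (-((a - μ) * (b - μ)) * s ^ 2 / 2) :=
        integral_exp_mul_le_of_mem_Icc_of_integral_eq_zero (by linarith) (by linarith) hs
          (hmeas.aemeasurable.sub_const μ) hcentred hmean0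
    _ ≤ exp (s ^ 2 * (l - a) * (b - l) / 2) :=
        exp_le_exp.2 (by nlinarith [mul_le_mul_of_nonneg_left hvar (sq_nonneg s)])

/-- MGF bound for a bounded random variable whose mean lower bound satisfies `l ≥ (a+b)/2`. -/
theorem mgf_bound_high_lower_bound
    {Ω : Type*} [MeasurableSpace Ω] (P : Measure Ω) [IsProbabilityMeasure P]
    (a b l u μ : ℝ) (hab : a < b) (hal : a ≤ l) (hlu : l ≤ u) (hub : u ≤ b)
    (hl : (a + b) / 2 ≤ l)
    (X : Ω → ℝ) (hmeas : Measurable X)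
    (hbdd : ∀ᵐ ω ∂P, X ω ∈ Set.Icc a b)
    (hmean : ∫ ω, X ω ∂P = μ)
    (hlμ : l ≤ μ) (hμu : μ ≤ u)
    (s : ℝ) (hs : 0 ≤ s) :
    ∫ ω, Real.exp (s * (X ω - μ)) ∂P ≤ Real.exp (s ^ 2 * (l - a) * (b - l) / 2) :=
  mgf_bound_high_lower_bound_general P a b l μ hab hl X hmeas hbdd hmean hlμ s hs
end

section
/- Let a < b be real numbers and let X be a random variable taking values in [a,b] with mean μ satisfying l ≤ μ ≤ u, where a ≤ l ≤ u ≤ b. If u ≤ (a+b)/2, then for every s ≥ 0, E[exp(s(μ−X))] ≤ exp(s² (u−a)(b−u) / 2). -/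
/-!
Write `Y = μ - X`, a centred variable with values in `[μ - b, μ - a]`. By Taylor's theorem,
`log 𝔼[exp (s Y)] = Var_t[Y] s² / 2` for some `t ∈ (0, s)`, where `Var_t` is the variance under
the exponentially tilted measure. Bhatia–Davis bounds `Var_t[Y]` by `(μ - a - m)(m - μ + b)`,
with `m` the tilted mean of `Y`. Tilting by a positive parameter does not decrease the mean, so
`m ≥ 0`, and since `μ ≤ (a + b) / 2` the parabola is decreasing on `m ≥ 0`: the variance is at
most `(b - μ)(μ - a) ≤ (b - u)(u - a)`.
-/

open MeasureTheory Real

lemma le_mul_exp_mul_self {t : ℝ} (ht : 0 ≤ t) (x : ℝ) : x ≤ x * exp (t * x) := by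
  rcases le_total 0 x with hx | hx
  · exact le_mul_of_one_le_right hx (one_le_exp (mul_nonneg ht hx))
  · exact le_mul_of_le_one_right hx (exp_le_one_iff.2 (mul_nonpos_of_nonneg_of_nonpos ht hx))

namespace ProbabilityTheory

variable {Ω : Type*} {mΩ : MeasurableSpace Ω} {μ : Measure Ω} {X : Ω → ℝ} {t : ℝ}

lemma integral_tilted_mul_self_nonneg (hX : Integrable X μ) (hc : μ[X] = 0)
    (ht : t ∈ interior (integrableExpSet X μ)) (ht₀ : 0 ≤ t) :
    0 ≤ (μ.tilted (t * X ·))[X] := by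
  rw [integral_tilted_mul_self ht, deriv_cgf ht]
  refine div_nonneg ?_ mgf_nonneg
  rw [← hc]
  refine integral_mono hX ?_ fun ω ↦ le_mul_exp_mul_self ht₀ (X ω)
  simpa using integrable_pow_mul_exp_of_mem_interior_integrableExpSet ht 1

/-- Since `-(a * b) ≤ ((b - a) / 2) ^ 2`, this sharpens Hoeffding's lemma
`mgf_le_of_mem_Icc_of_integral_eq_zero` for nonnegative arguments. -/
lemma mgf_le_of_mem_Icc_of_integral_eq_zero_of_add_nonpos [IsProbabilityMeasure μ] {a b : ℝ}
    (hm : AEMeasurable X μ) (hb : ∀ᵐ ω ∂μ, X ω ∈ Set.Icc a b) (hc : μ[X] = 0)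
    (hab : a + b ≤ 0) (ht : 0 ≤ t) :
    mgf X μ t ≤ exp (-(a * b) * t ^ 2 / 2) := by
  rcases ht.eq_or_lt with rfl | ht
  · simp
  have hi (u : ℝ) : Integrable (fun ω ↦ exp (u * X ω)) μ := integrable_exp_mul_of_mem_Icc hm hb
  have hs : ∀ u, u ∈ interior (integrableExpSet X μ) := by simp [hi, integrableExpSet]
  obtain ⟨u, hu, hcgf⟩ := exists_cgf_eq_iteratedDeriv_two_cgf_mul ht hc fun u _ ↦ hs u
  have : IsProbabilityMeasure (μ.tilted (u * X ·)) := isProbabilityMeasure_tilted (hi u)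
  have hmean_tilted : 0 ≤ (μ.tilted (u * X ·))[X] :=
    integral_tilted_mul_self_nonneg (Integrable.of_mem_Icc a b hm hb) hc (hs u) hu.1.le
  rw [← exp_cgf (hi t), exp_le_exp, hcgf]
  gcongr
  calc
  _ = Var[X; μ.tilted (u * X ·)] := (variance_tilted_mul (hs u)).symm
  _ ≤ (b - (μ.tilted (u * X ·))[X]) * ((μ.tilted (u * X ·))[X] - a) :=
    variance_le_sub_mul_sub (tilted_absolutelyContinuous μ (u * X ·) hb)
      (hm.mono_ac (tilted_absolutelyContinuous μ (u * X ·)))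
  _ ≤ -(a * b) := by nlinarith

end ProbabilityTheory

theorem mgf_bound_low_upper_bound_general
    {Ω : Type*} [MeasurableSpace Ω] (P : Measure Ω) [IsProbabilityMeasure P]
    (a b u μ : ℝ)
    (hu : u ≤ (a + b) / 2)
    (X : Ω → ℝ) (hmeas : Measurable X)
    (hbdd : ∀ᵐ ω ∂P, X ω ∈ Set.Icc a b)
    (hmean : ∫ ω, X ω ∂P = μ)
    (hμu : μ ≤ u)
    (s : ℝ) (hs : 0 ≤ s) :
    ∫ ω, Real.exp (s * (μ - X ω)) ∂P ≤ Real.exp (s ^ 2 * (u - a) * (b - u) / 2) := by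
  have hbdd' : ∀ᵐ ω ∂P, μ - X ω ∈ Set.Icc (μ - b) (μ - a) := by
    filter_upwards [hbdd] with ω hω
    exact ⟨by linarith [hω.2], by linarith [hω.1]⟩
  have hcentred : ∫ ω, μ - X ω ∂P = 0 := by
    rw [integral_sub (integrable_const μ) (Integrable.of_mem_Icc a b hmeas.aemeasurable hbdd),
      hmean, integral_const, probReal_univ, one_smul, sub_self]
  calc ∫ ω, Real.exp (s * (μ - X ω)) ∂P
      ≤ Real.exp (-((μ - b) * (μ - a)) * s ^ 2 / 2) :=
        ProbabilityTheory.mgf_le_of_mem_Icc_of_integral_eq_zero_of_add_nonpos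
          (measurable_const.sub hmeas).aemeasurable hbdd' hcentred (by linarith) hs
    _ ≤ Real.exp (s ^ 2 * (u - a) * (b - u) / 2) := by
        have hproxy : -((μ - b) * (μ - a)) ≤ (u - a) * (b - u) := by
          nlinarith [mul_nonneg (sub_nonneg.2 hμu) (by linarith : 0 ≤ a + b - u - μ)]
        rw [Real.exp_le_exp]
        nlinarith [mul_le_mul_of_nonneg_left hproxy (sq_nonneg s)]

/-- MGF bound for the negated deviation of a bounded random variable whose mean
upper bound satisfies `u ≤ (a+b)/2`. -/
theorem mgf_bound_low_upper_bound
    {Ω : Type*} [MeasurableSpace Ω] (P : Measure Ω) [IsProbabilityMeasure P]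
    (a b l u μ : ℝ) (hab : a < b) (hal : a ≤ l) (hlu : l ≤ u) (hub : u ≤ b)
    (hu : u ≤ (a + b) / 2)
    (X : Ω → ℝ) (hmeas : Measurable X)
    (hbdd : ∀ᵐ ω ∂P, X ω ∈ Set.Icc a b)
    (hmean : ∫ ω, X ω ∂P = μ)
    (hlμ : l ≤ μ) (hμu : μ ≤ u)
    (s : ℝ) (hs : 0 ≤ s) :
    ∫ ω, Real.exp (s * (μ - X ω)) ∂P ≤ Real.exp (s ^ 2 * (u - a) * (b - u) / 2) :=
  mgf_bound_low_upper_bound_general P a b u μ hu X hmeas hbdd hmean hμu s hs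
end

section
/- For every θ ∈ (0,1) and every r ≥ 0 with θ ≤ 1/(1+e^r), it holds that −θr + log(1−θ+θe^r) ≤ (r²/2) · θ(1−θ)e^r / (1−θ+θe^r)². -/
/-!
With `D(x) = 1 - θ + θ eˣ` and the tilted mean `p(x) = θ eˣ / D(x)`, one has `φ_θ(0) = φ_θ'(0) = 0`,
`φ_θ' = p - θ` and `φ_θ'' = p (1 - p)`. The hypothesis `θ ≤ 1/(1+eʳ)` says exactly `p(r) ≤ 1/2`; as
`p` is increasing and `t ↦ t (1 - t)` increases on `t ≤ 1/2`, `φ_θ''` is bounded by `φ_θ''(r)` on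
`[0, r]`, and second-order Taylor gives the claim.
-/

open Real Set

theorem le_taylor_two_of_deriv2_le {f f' f'' : ℝ → ℝ} {a b c : ℝ} (hab : a ≤ b)
    (hf : ∀ x ∈ Icc a b, HasDerivAt f (f' x) x) (hf' : ∀ x ∈ Icc a b, HasDerivAt f' (f'' x) x)
    (hc : ∀ x ∈ Icc a b, f'' x ≤ c) :
    f b ≤ f a + f' a * (b - a) + c / 2 * (b - a) ^ 2 := by
  have hB' (x : ℝ) : HasDerivAt (fun y => f' a + c * (y - a)) c x := by
    simpa using ((hasDerivAt_id x).sub_const a).const_mul c |>.const_add (f' a)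
  have hB (x : ℝ) : HasDerivAt (fun y => f a + f' a * (y - a) + c / 2 * (y - a) ^ 2)
      (f' a + c * (x - a)) x := by
    have := (((hasDerivAt_id x).sub_const a).const_mul (f' a)).const_add (f a) |>.add
      ((((hasDerivAt_id x).sub_const a).pow 2).const_mul (c / 2))
    refine this.congr_deriv ?_
    simp only [id, Nat.cast_ofNat]
    ring
  have h_deriv_le : ∀ x ∈ Icc a b, f' x ≤ f' a + c * (x - a) :=
    image_le_of_deriv_right_le_deriv_boundary
      (fun x hx => (hf' x hx).continuousAt.continuousWithinAt)
      (fun x hx => (hf' x (Ico_subset_Icc_self hx)).hasDerivWithinAt)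
      (by simp) (fun x _ => (hB' x).continuousAt.continuousWithinAt)
      (fun x _ => (hB' x).hasDerivWithinAt)
      (fun x hx => hc x (Ico_subset_Icc_self hx))
  exact image_le_of_deriv_right_le_deriv_boundary
    (fun x hx => (hf x hx).continuousAt.continuousWithinAt)
    (fun x hx => (hf x (Ico_subset_Icc_self hx)).hasDerivWithinAt)
    (by simp) (fun x _ => (hB x).continuousAt.continuousWithinAt)
    (fun x _ => (hB x).hasDerivWithinAt)
    (fun x hx => h_deriv_le x (Ico_subset_Icc_self hx)) (right_mem_Icc.2 hab)

theorem mul_one_sub_le_mul_one_sub {s t : ℝ} (hst : s ≤ t) (ht : t ≤ 1 / 2) :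
    s * (1 - s) ≤ t * (1 - t) := by
  nlinarith

noncomputable section Bernoulli

def bernoulliMGF (θ x : ℝ) : ℝ := 1 - θ + θ * exp x

/-- The paper's `φ_θ`: the cumulant generating function of `X - θ` for `X ∼ Bernoulli θ`. -/
def centeredBernoulliCGF (θ x : ℝ) : ℝ := -θ * x + log (bernoulliMGF θ x)

def tiltedMean (θ x : ℝ) : ℝ := θ * exp x / bernoulliMGF θ x

variable {θ : ℝ}

theorem bernoulliMGF_zero (θ : ℝ) : bernoulliMGF θ 0 = 1 := by
  simp [bernoulliMGF]

theorem bernoulliMGF_pos (hθ₀ : 0 ≤ θ) (hθ₁ : θ ≤ 1) (x : ℝ) : 0 < bernoulliMGF θ x := by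
  unfold bernoulliMGF
  nlinarith [mul_le_mul_of_nonneg_left (min_le_left 1 (exp x)) (sub_nonneg.2 hθ₁),
    mul_le_mul_of_nonneg_left (min_le_right 1 (exp x)) hθ₀, lt_min one_pos (exp_pos x)]

theorem hasDerivAt_bernoulliMGF (θ x : ℝ) : HasDerivAt (bernoulliMGF θ) (θ * exp x) x :=
  ((hasDerivAt_exp x).const_mul θ).const_add (1 - θ)

theorem centeredBernoulliCGF_zero (θ : ℝ) : centeredBernoulliCGF θ 0 = 0 := by
  simp [centeredBernoulliCGF, bernoulliMGF_zero]

theorem tiltedMean_zero (θ : ℝ) : tiltedMean θ 0 = θ := by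
  simp [tiltedMean, bernoulliMGF_zero]

theorem tiltedMean_mul_one_sub (hθ₀ : 0 ≤ θ) (hθ₁ : θ ≤ 1) (x : ℝ) :
    tiltedMean θ x * (1 - tiltedMean θ x) = θ * (1 - θ) * exp x / bernoulliMGF θ x ^ 2 := by
  have := (bernoulliMGF_pos hθ₀ hθ₁ x).ne'
  unfold tiltedMean
  field_simp
  unfold bernoulliMGF
  ring

theorem tiltedMean_mono (hθ₀ : 0 ≤ θ) (hθ₁ : θ ≤ 1) : Monotone (tiltedMean θ) := by
  intro x y hxy
  unfold tiltedMean
  rw [div_le_div_iff₀ (bernoulliMGF_pos hθ₀ hθ₁ x) (bernoulliMGF_pos hθ₀ hθ₁ y), bernoulliMGF,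
    bernoulliMGF]
  have := exp_le_exp.2 hxy
  nlinarith [mul_nonneg (mul_nonneg hθ₀ (sub_nonneg.2 hθ₁)) (sub_nonneg.2 this)]

theorem tiltedMean_le_half_iff (hθ₀ : 0 ≤ θ) (hθ₁ : θ ≤ 1) (x : ℝ) :
    tiltedMean θ x ≤ 1 / 2 ↔ θ ≤ 1 / (1 + exp x) := by
  unfold tiltedMean
  rw [div_le_div_iff₀ (bernoulliMGF_pos hθ₀ hθ₁ x) two_pos, le_div_iff₀ (by positivity),
    bernoulliMGF]
  constructor <;> intro h <;> linarith

theorem hasDerivAt_centeredBernoulliCGF (hθ₀ : 0 ≤ θ) (hθ₁ : θ ≤ 1) (x : ℝ) :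
    HasDerivAt (centeredBernoulliCGF θ) (tiltedMean θ x - θ) x := by
  have := ((hasDerivAt_id x).const_mul (-θ)).add
    ((hasDerivAt_bernoulliMGF θ x).log (bernoulliMGF_pos hθ₀ hθ₁ x).ne')
  refine this.congr_deriv ?_
  rw [tiltedMean]
  ring

theorem hasDerivAt_tiltedMean (hθ₀ : 0 ≤ θ) (hθ₁ : θ ≤ 1) (x : ℝ) :
    HasDerivAt (tiltedMean θ) (tiltedMean θ x * (1 - tiltedMean θ x)) x := by
  have := ((hasDerivAt_exp x).const_mul θ).div (hasDerivAt_bernoulliMGF θ x)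
    (bernoulliMGF_pos hθ₀ hθ₁ x).ne'
  refine this.congr_deriv ?_
  rw [tiltedMean_mul_one_sub hθ₀ hθ₁]
  unfold bernoulliMGF
  ring

end Bernoulli

/-- Sharpened Hoeffding-lemma exponent bound for small `θ`:
if `θ ≤ 1/(1+e^r)` then `-θr + log(1-θ+θe^r) ≤ (r²/2)·θ(1-θ)e^r/(1-θ+θe^r)²`. -/
theorem phi_le_of_theta_small (θ r : ℝ) (hθ : θ ∈ Set.Ioo (0 : ℝ) 1) (hr : 0 ≤ r)
    (hθr : θ ≤ 1 / (1 + Real.exp r)) :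
    -θ * r + Real.log (1 - θ + θ * Real.exp r) ≤
      r ^ 2 / 2 * (θ * (1 - θ) * Real.exp r / (1 - θ + θ * Real.exp r) ^ 2) := by
  obtain ⟨hθ₀, hθ₁⟩ := And.imp le_of_lt le_of_lt hθ
  have h_half : tiltedMean θ r ≤ 1 / 2 := (tiltedMean_le_half_iff hθ₀ hθ₁ r).2 hθr
  have h_taylor := le_taylor_two_of_deriv2_le hr
    (fun x _ => hasDerivAt_centeredBernoulliCGF hθ₀ hθ₁ x)
    (fun x _ => (hasDerivAt_tiltedMean hθ₀ hθ₁ x).sub_const θ)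
    (fun x hx => mul_one_sub_le_mul_one_sub (tiltedMean_mono hθ₀ hθ₁ hx.2) h_half)
  rw [centeredBernoulliCGF_zero, tiltedMean_zero, tiltedMean_mul_one_sub hθ₀ hθ₁] at h_taylor
  calc centeredBernoulliCGF θ r ≤ _ := h_taylor
    _ = r ^ 2 / 2 * (θ * (1 - θ) * exp r / bernoulliMGF θ r ^ 2) := by ring
end
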